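/- arXiv:1702.06282 — 3 statements merged into one kernel-verified Lean document; each statement's English description precedes it below -/
import Mathlib

section
/- Let u : E → ℝ be measurable with P_t|u| < ∞ pointwise for all t ≥ 0, let (τ_n)_{n≥1} be an admissible sequence of finite partitions of ℝ₊, and set u_i := sup_n u_i^{τ_n} for i = 1, 2. Then: (a) u₁ + u₂ = sup_n V_{τ_n}(u) pointwise; (b) P_r u_i ≤ u_i pointwise for every r ∈ ∪_{k≥1} τ_k and i = 1, 2; (c) u = u₁ − u₂ on the set {sup_n V_{τ_n}(u) < ∞}. -/
open MeasureTheory ProbabilityTheory ENNReal Filter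
open scoped NNReal

/-- A sub-Markovian semigroup of kernels on a measurable space `E`. -/
structure SubMarkovSemigroup (E : Type*) [MeasurableSpace E] where
  P : ℝ≥0 → Kernel E E
  subMarkov : ∀ t x, P t x Set.univ ≤ 1
  map_zero : ∀ (f : E → ℝ≥0∞), Measurable f → ∀ x, ∫⁻ y, f y ∂(P 0 x) = f x
  map_add : ∀ (t s : ℝ≥0) (f : E → ℝ≥0∞), Measurable f → ∀ x,
      ∫⁻ y, f y ∂(P (t + s) x) = ∫⁻ y, ∫⁻ z, f z ∂(P s y) ∂(P t x)

/-- Action of the time-`t` kernel on real-valued functions: `P_t f = P_t f⁺ - P_t f⁻`. -/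
noncomputable def SubMarkovSemigroup.act {E : Type*} [MeasurableSpace E]
    (S : SubMarkovSemigroup E) (t : ℝ≥0) (f : E → ℝ) (x : E) : ℝ :=
  ∫ y, f y ∂(S.P t x)

/-- A finite partition `0 = t_0 ≤ t_1 ≤ … ≤ t_n < ∞` of `ℝ₊`. -/
structure FinPartition where
  n : ℕ
  t : Fin (n + 1) → ℝ≥0
  mono : Monotone t
  first : t 0 = 0

/-- `V_τ(u) = Σ_{i=1}^n P_{t_{i-1}} |u - P_{t_i - t_{i-1}} u| + P_{t_n}|u|`. -/
noncomputable def SubMarkovSemigroup.V {E : Type*} [MeasurableSpace E]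
    (S : SubMarkovSemigroup E) (u : E → ℝ) (τ : FinPartition) (x : E) : ℝ :=
  (∑ i : Fin τ.n, S.act (τ.t i.castSucc)
      (fun y => |u y - S.act (τ.t i.succ - τ.t i.castSucc) u y|) x)
  + S.act (τ.t (Fin.last τ.n)) (fun y => |u y|) x

/-- `u₁^τ = Σ_{i=1}^n P_{t_{i-1}} (u - P_{t_i - t_{i-1}} u)⁺ + P_{t_n} u⁺`. -/
noncomputable def SubMarkovSemigroup.uPos {E : Type*} [MeasurableSpace E]
    (S : SubMarkovSemigroup E) (u : E → ℝ) (τ : FinPartition) (x : E) : ℝ :=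
  (∑ i : Fin τ.n, S.act (τ.t i.castSucc)
      (fun y => max (u y - S.act (τ.t i.succ - τ.t i.castSucc) u y) 0) x)
  + S.act (τ.t (Fin.last τ.n)) (fun y => max (u y) 0) x

/-- `u₂^τ = Σ_{i=1}^n P_{t_{i-1}} (u - P_{t_i - t_{i-1}} u)⁻ + P_{t_n} u⁻`. -/
noncomputable def SubMarkovSemigroup.uNeg {E : Type*} [MeasurableSpace E]
    (S : SubMarkovSemigroup E) (u : E → ℝ) (τ : FinPartition) (x : E) : ℝ :=
  (∑ i : Fin τ.n, S.act (τ.t i.castSucc)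
      (fun y => max (-(u y - S.act (τ.t i.succ - τ.t i.castSucc) u y)) 0) x)
  + S.act (τ.t (Fin.last τ.n)) (fun y => max (-u y) 0) x

/-- A sequence of finite partitions of `ℝ₊` is admissible if it is increasing, the union
of the partition points is dense in `ℝ₊`, and it is stable under translation by its
points: if `r` is a point of some `τ_k`, then `r + τ_n ⊆ ∪_k τ_k` for all `n`. -/
def Admissible (τ : ℕ → FinPartition) : Prop :=
  (∀ n : ℕ, Set.range (τ n).t ⊆ Set.range (τ (n + 1)).t) ∧
  Dense (⋃ k : ℕ, Set.range (τ k).t) ∧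
  (∀ r ∈ ⋃ k : ℕ, Set.range (τ k).t, ∀ (n : ℕ) (i : Fin ((τ n).n + 1)),
    r + (τ n).t i ∈ ⋃ k : ℕ, Set.range (τ k).t)


/-!
Read `u₁^τ` as a functional of the ordered list of partition points. By the semigroup property
and `(g + P_e h)⁺ ≤ g⁺ + P_e h⁺`, inserting a point can only increase it, so `u₁^{τ_n}` increases
with `n`. Moreover `P_r u₁^τ` is the same functional along `r + τ`, and by admissibility this
list lies inside some `τ_m`; hence `P_r u₁^{τ_n} ≤ u₁^{τ_m}`, and monotone convergence gives (b).
Since `u₂^τ` is `u₁^τ` for `-u`, the same holds for `u₂`. Part (a) is termwise `|a| = a⁺ + a⁻`,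
and (c) holds because `u₁^τ - u₂^τ` telescopes to `P_0 u = u`.
-/

lemma lintegral_iSup_ofReal_le_of_forall_exists {α : Type*} [MeasurableSpace α] {μ : Measure α}
    {F : ℕ → α → ℝ} (hFm : ∀ n, Measurable (F n)) (hF : Monotone F) (hF0 : ∀ n, 0 ≤ F n)
    (hFi : ∀ n, Integrable (F n) μ) {c : ℕ → ℝ} (h : ∀ n, ∃ m, ∫ y, F n y ∂μ ≤ c m) :
    ∫⁻ y, ⨆ n, ENNReal.ofReal (F n y) ∂μ ≤ ⨆ n, ENNReal.ofReal (c n) := by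
  rw [lintegral_iSup (fun n => (hFm n).ennreal_ofReal)
    fun n m hnm y => ENNReal.ofReal_le_ofReal (hF hnm y)]
  refine iSup_le fun n => ?_
  obtain ⟨m, hm⟩ := h n
  rw [← ofReal_integral_eq_lintegral_ofReal (hFi n) (Eventually.of_forall (hF0 n))]
  exact (ENNReal.ofReal_le_ofReal hm).trans (le_iSup (fun n => ENNReal.ofReal (c n)) m)

lemma eq_toReal_iSup_ofReal_sub_toReal_iSup_ofReal {a b : ℕ → ℝ} {c : ℝ} (ha : ∀ n, 0 ≤ a n)
    (hb : ∀ n, 0 ≤ b n) (hab : ∀ n, a n - b n = c)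
    (hfin : (⨆ n, ENNReal.ofReal (a n)) + (⨆ n, ENNReal.ofReal (b n)) < ∞) :
    c = (⨆ n, ENNReal.ofReal (a n)).toReal - (⨆ n, ENNReal.ofReal (b n)).toReal := by
  obtain ⟨hA, hB⟩ := ENNReal.add_lt_top.mp hfin
  have hc := max_zero_sub_max_neg_zero_eq_self c
  have h : (⨆ n, ENNReal.ofReal (a n)) + ENNReal.ofReal (max (-c) 0) =
      (⨆ n, ENNReal.ofReal (b n)) + ENNReal.ofReal (max c 0) := by
    rw [ENNReal.iSup_add, ENNReal.iSup_add]
    congr 1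
    funext n
    rw [← ENNReal.ofReal_add (ha n) (le_max_right _ _),
      ← ENNReal.ofReal_add (hb n) (le_max_right _ _)]
    congr 1
    linarith [hab n]
  have h' := congrArg ENNReal.toReal h
  rw [ENNReal.toReal_add hA.ne ENNReal.ofReal_ne_top,
    ENNReal.toReal_add hB.ne ENNReal.ofReal_ne_top,
    ENNReal.toReal_ofReal (le_max_right _ _), ENNReal.toReal_ofReal (le_max_right _ _)] at h'
  linarith

namespace SubMarkovSemigroup

variable {E : Type*} [MeasurableSpace E] {S : SubMarkovSemigroup E}

lemma P_zero_apply (x : E) : S.P 0 x = Measure.dirac x := by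
  ext s hs
  rw [← lintegral_indicator_one hs, S.map_zero _ (measurable_one.indicator hs) x,
    Measure.dirac_apply' _ hs]

lemma P_add (t s : ℝ≥0) : S.P (t + s) = S.P s ∘ₖ S.P t := by
  ext x A hA
  rw [Kernel.comp_apply' _ _ _ hA, ← lintegral_indicator_one hA,
    S.map_add t s _ (measurable_one.indicator hA) x]
  simp_rw [lintegral_indicator_one hA]

variable (S) in
def IsIntegrable (f : E → ℝ) : Prop := ∀ (t : ℝ≥0) (x : E), Integrable f (S.P t x)

section act

variable {f g : E → ℝ} {t s : ℝ≥0} {x : E}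

lemma IsIntegrable.act (hf : S.IsIntegrable f) (s : ℝ≥0) : S.IsIntegrable (S.act s f) := by
  intro t x
  have := hf (t + s) x
  rw [P_add] at this
  exact this.integral_comp

lemma IsIntegrable.add (hf : S.IsIntegrable f) (hg : S.IsIntegrable g) :
    S.IsIntegrable (fun y => f y + g y) := fun t x => (hf t x).add (hg t x)

lemma IsIntegrable.sub (hf : S.IsIntegrable f) (hg : S.IsIntegrable g) :
    S.IsIntegrable (fun y => f y - g y) := fun t x => (hf t x).sub (hg t x)

lemma IsIntegrable.neg (hf : S.IsIntegrable f) : S.IsIntegrable (fun y => -f y) :=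
  fun t x => (hf t x).neg

lemma IsIntegrable.max_zero (hf : S.IsIntegrable f) : S.IsIntegrable (fun y => max (f y) 0) :=
  fun t x => (hf t x).pos_part

lemma measurable_act (hf : Measurable f) (t : ℝ≥0) : Measurable (S.act t f) :=
  hf.stronglyMeasurable.integral_kernel.measurable

lemma act_zero (hf : Measurable f) (x : E) : S.act 0 f x = f x := by
  rw [act, P_zero_apply, integral_dirac' _ _ hf.stronglyMeasurable]

lemma act_act (hf : S.IsIntegrable f) (t s : ℝ≥0) (x : E) :
    S.act t (S.act s f) x = S.act (t + s) f x := by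
  have := hf (t + s) x
  rw [P_add] at this
  rw [act, act, P_add, Kernel.integral_comp this]
  rfl

lemma act_nonneg (hf : 0 ≤ f) (t : ℝ≥0) (x : E) : 0 ≤ S.act t f x :=
  integral_nonneg hf

lemma act_mono (hf : Integrable f (S.P t x)) (hg : Integrable g (S.P t x)) (h : f ≤ g) :
    S.act t f x ≤ S.act t g x :=
  integral_mono hf hg h

lemma act_add (hf : Integrable f (S.P t x)) (hg : Integrable g (S.P t x)) :
    S.act t (fun y => f y + g y) x = S.act t f x + S.act t g x :=
  integral_add hf hg

lemma act_sub (hf : Integrable f (S.P t x)) (hg : Integrable g (S.P t x)) :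
    S.act t (fun y => f y - g y) x = S.act t f x - S.act t g x :=
  integral_sub hf hg

lemma act_neg (t : ℝ≥0) (f : E → ℝ) (x : E) : S.act t (fun y => -f y) x = -S.act t f x :=
  integral_neg f

lemma act_max_zero_sub_act_max_neg_zero (hf : S.IsIntegrable f) (t : ℝ≥0) (x : E) :
    S.act t (fun y => max (f y) 0) x - S.act t (fun y => max (-f y) 0) x = S.act t f x := by
  rw [← act_sub (hf.max_zero t x) (hf.neg.max_zero t x)]
  simp only [max_zero_sub_max_neg_zero_eq_self]

lemma act_max_zero_add_act_max_neg_zero (hf : S.IsIntegrable f) (t : ℝ≥0) (x : E) :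
    S.act t (fun y => max (f y) 0) x + S.act t (fun y => max (-f y) 0) x =
      S.act t (fun y => |f y|) x := by
  rw [← act_add (hf.max_zero t x) (hf.neg.max_zero t x)]
  simp only [max_zero_add_max_neg_zero_eq_abs_self]

lemma act_max_add_act_le (hf : S.IsIntegrable f) (hg : S.IsIntegrable g) (a e : ℝ≥0)
    (x : E) :
    S.act a (fun y => max (f y + S.act e g y) 0) x ≤
      S.act a (fun y => max (f y) 0) x + S.act (a + e) (fun y => max (g y) 0) x := by
  have hpt : ∀ y, max (f y + S.act e g y) 0 ≤ max (f y) 0 + S.act e (fun z => max (g z) 0) y := by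
    intro y
    have hle : S.act e g y ≤ S.act e (fun z => max (g z) 0) y :=
      act_mono (hg e y) (hg.max_zero e y) fun z => le_max_left _ _
    have h0 : 0 ≤ S.act e (fun z => max (g z) 0) y := act_nonneg (fun z => le_max_right _ _) e y
    exact max_le (by linarith [le_max_left (f y) 0]) (add_nonneg (le_max_right _ _) h0)
  calc S.act a (fun y => max (f y + S.act e g y) 0) x
      ≤ S.act a (fun y => max (f y) 0 + S.act e (fun z => max (g z) 0) y) x :=
        act_mono ((hf.add (hg.act e)).max_zero a x)
          ((hf.max_zero a x).add (hg.max_zero.act e a x)) hpt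
    _ = S.act a (fun y => max (f y) 0) x + S.act (a + e) (fun y => max (g y) 0) x := by
        rw [act_add (hf.max_zero a x) (hg.max_zero.act e a x), act_act hg.max_zero]

end act

variable (S) in
/-- `posVar f t₀ [t₁, …, tₙ] = Σ_{i<n} P_{tᵢ} (f - P_{tᵢ₊₁ - tᵢ} f)⁺ + P_{tₙ} f⁺`, that is,
`u₁^τ` along the times `t₀, …, tₙ`, which need not be sorted or distinct. -/
noncomputable def posVar (f : E → ℝ) : ℝ≥0 → List ℝ≥0 → E → ℝ
  | a, [] => S.act a fun y => max (f y) 0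
  | a, b :: l => S.act a (fun y => max (f y - S.act (b - a) f y) 0) + posVar f b l

section posVar

variable {f : E → ℝ} {a b : ℝ≥0} {l l₁ l₂ : List ℝ≥0} {x : E}

lemma posVar_nil : S.posVar f a [] x = S.act a (fun y => max (f y) 0) x := rfl

lemma posVar_cons :
    S.posVar f a (b :: l) x =
      S.act a (fun y => max (f y - S.act (b - a) f y) 0) x + S.posVar f b l x := rfl

lemma posVar_nonneg (f : E → ℝ) (a : ℝ≥0) (l : List ℝ≥0) (x : E) : 0 ≤ S.posVar f a l x := by
  induction l generalizing a with
  | nil => exact act_nonneg (fun y => le_max_right _ _) a x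
  | cons b l ih => exact add_nonneg (act_nonneg (fun y => le_max_right _ _) a x) (ih b)

lemma measurable_posVar (hf : Measurable f) (a : ℝ≥0) (l : List ℝ≥0) :
    Measurable (S.posVar f a l) := by
  induction l generalizing a with
  | nil => exact measurable_act (hf.max measurable_const) a
  | cons b l ih =>
    exact (measurable_act ((hf.sub (measurable_act hf _)).max measurable_const) a).add (ih b)

lemma IsIntegrable.posVar (hf : S.IsIntegrable f) (a : ℝ≥0) (l : List ℝ≥0) :
    S.IsIntegrable (S.posVar f a l) := by
  induction l generalizing a with
  | nil => exact hf.max_zero.act a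
  | cons b l ih => exact ((hf.sub (hf.act _)).max_zero.act a).add (ih b)

lemma act_posVar (hf : S.IsIntegrable f) (r a : ℝ≥0) (l : List ℝ≥0) (x : E) :
    S.act r (S.posVar f a l) x = S.posVar f (r + a) (l.map (r + ·)) x := by
  induction l generalizing a x with
  | nil => exact act_act hf.max_zero r a x
  | cons b l ih =>
    have hterm := (hf.sub (hf.act (b - a))).max_zero.act a
    rw [List.map_cons, posVar_cons, ← ih b x, add_tsub_add_eq_tsub_left,
      ← act_act (hf.sub (hf.act (b - a))).max_zero,
      ← act_add (hterm r x) (hf.posVar b l r x)]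
    rfl

lemma posVar_cons_self (hf : Measurable f) : S.posVar f a (a :: l) x = S.posVar f a l x := by
  rw [posVar_cons, tsub_self]
  simp only [act_zero hf, sub_self, max_self]
  simp [act]

lemma posVar_le_cons (hf : S.IsIntegrable f) (hab : a ≤ b) (hl : (b :: l).Pairwise (· ≤ ·)) :
    S.posVar f a l x ≤ S.posVar f a (b :: l) x := by
  cases l with
  | nil =>
    have key := act_max_add_act_le (hf.sub (hf.act (b - a))) hf a (b - a) x
    simpa only [sub_add_cancel, add_tsub_cancel_of_le hab, posVar_nil, posVar_cons] using key
  | cons c l =>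
    have hbc : b ≤ c := List.rel_of_pairwise_cons hl List.mem_cons_self
    have hsplit : ∀ y, f y - S.act (b - a) f y + S.act (b - a) (fun z => f z - S.act (c - b) f z) y
        = f y - S.act (c - a) f y := by
      intro y
      rw [act_sub (hf _ y) (hf.act _ _ y), act_act hf, add_comm (b - a),
        tsub_add_tsub_cancel hbc hab]
      ring
    have key := act_max_add_act_le (hf.sub (hf.act (b - a))) (hf.sub (hf.act (c - b))) a (b - a) x
    simp only [hsplit, add_tsub_cancel_of_le hab] at key
    simp only [posVar_cons]
    linarith

lemma posVar_mono_of_sublist (hf : S.IsIntegrable f) (h : List.Sublist l₁ l₂)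
    (hl₂ : (a :: l₂).Pairwise (· ≤ ·)) : S.posVar f a l₁ x ≤ S.posVar f a l₂ x := by
  induction h generalizing a with
  | slnil => exact le_rfl
  | cons b _ ih =>
    obtain ⟨hab, hbl⟩ := List.pairwise_cons.mp hl₂
    exact (ih (hl₂.sublist ((List.sublist_cons_self b _).cons_cons a))).trans
      (posVar_le_cons hf (hab b List.mem_cons_self) hbl)
  | cons_cons b _ ih =>
    simp only [posVar_cons]
    exact add_le_add_right (ih (List.pairwise_cons.mp hl₂).2) _

lemma posVar_dedup (hf : Measurable f) (hl : (a :: l).Pairwise (· ≤ ·)) :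
    S.posVar f a l.dedup x = S.posVar f a l x := by
  induction l generalizing a with
  | nil => rfl
  | cons b l ih =>
    have hbl := (List.pairwise_cons.mp hl).2
    by_cases hb : b ∈ l
    · obtain ⟨c, l, rfl⟩ := List.exists_cons_of_ne_nil (List.ne_nil_of_mem hb)
      have hcb : c ≤ b := by
        rcases List.mem_cons.mp hb with rfl | h
        exacts [le_rfl, List.rel_of_pairwise_cons (List.pairwise_cons.mp hbl).2 h]
      obtain rfl := le_antisymm (List.rel_of_pairwise_cons hbl List.mem_cons_self) hcb
      rw [List.dedup_cons_of_mem hb, ih (hl.sublist ((List.sublist_cons_self b _).cons_cons a)),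
        posVar_cons (l := b :: l), posVar_cons_self hf, posVar_cons]
    · rw [List.dedup_cons_of_notMem hb, posVar_cons, posVar_cons, ih hbl]

lemma posVar_mono_of_subset (hfm : Measurable f) (hf : S.IsIntegrable f)
    (hl₂ : (a :: l₂).Pairwise (· ≤ ·)) (hl₁ : l₁.Pairwise (· ≤ ·)) (h : l₁ ⊆ l₂) :
    S.posVar f a l₁ x ≤ S.posVar f a l₂ x := by
  have hal₁ : (a :: l₁).Pairwise (· ≤ ·) :=
    List.pairwise_cons.mpr ⟨fun b hb => List.rel_of_pairwise_cons hl₂ (h hb), hl₁⟩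
  have hsub : List.Sublist l₁.dedup l₂ :=
    List.sublist_of_subperm_of_pairwise
      (List.subperm_of_subset (List.nodup_dedup l₁) (List.Subset.trans (List.dedup_subset l₁) h))
      (hl₁.sublist (List.dedup_sublist l₁)) (List.pairwise_cons.mp hl₂).2
  rw [← posVar_dedup hfm hal₁]
  exact posVar_mono_of_sublist hf hsub hl₂

lemma posVar_sub_posVar_neg (hf : S.IsIntegrable f) (hl : (a :: l).Pairwise (· ≤ ·)) :
    S.posVar f a l x - S.posVar (fun y => -f y) a l x = S.act a f x := by
  induction l generalizing a with
  | nil => exact act_max_zero_sub_act_max_neg_zero hf a x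
  | cons b l ih =>
    have hneg : ∀ y, -f y - S.act (b - a) (fun z => -f z) y = -(f y - S.act (b - a) f y) := by
      intro y
      rw [act_neg]
      ring
    simp only [posVar_cons, hneg]
    have key := act_max_zero_sub_act_max_neg_zero (hf.sub (hf.act (b - a))) a x
    rw [act_sub (hf a x) (hf.act _ a x), act_act hf,
      add_tsub_cancel_of_le (List.rel_of_pairwise_cons hl List.mem_cons_self)] at key
    linarith [ih (List.pairwise_cons.mp hl).2]

lemma posVar_ofFn {m : ℕ} (v : Fin (m + 1) → ℝ≥0) (x : E) :
    S.posVar f (v 0) (List.ofFn fun i : Fin m => v i.succ) x =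
      (∑ i : Fin m, S.act (v i.castSucc)
          (fun y => max (f y - S.act (v i.succ - v i.castSucc) f y) 0) x)
        + S.act (v (Fin.last m)) (fun y => max (f y) 0) x := by
  induction m with
  | zero => simp [posVar_nil]
  | succ m ih =>
    rw [List.ofFn_succ, posVar_cons, ih (fun i => v i.succ), Fin.sum_univ_succ]
    simp only [Fin.castSucc_zero, ← Fin.succ_castSucc, Fin.succ_last]
    ring

end posVar

end SubMarkovSemigroup

lemma FinPartition.pairwise_zero_cons (τ : FinPartition) :
    (0 :: List.ofFn τ.t).Pairwise (· ≤ ·) :=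
  List.pairwise_cons.mpr ⟨fun _ _ => zero_le, (List.sortedLE_ofFn_iff.mpr τ.mono).pairwise⟩

lemma Admissible.monotone_range {τ : ℕ → FinPartition} (hτ : Admissible τ) :
    Monotone fun n => Set.range (τ n).t :=
  monotone_nat_of_le_succ hτ.1

lemma Admissible.exists_add_mem_range {τ : ℕ → FinPartition} (hτ : Admissible τ) {r : ℝ≥0}
    (hr : r ∈ ⋃ k : ℕ, Set.range (τ k).t) (n : ℕ) :
    ∃ m, ∀ i, r + (τ n).t i ∈ Set.range (τ m).t := by
  choose K hK using fun i => Set.mem_iUnion.mp (hτ.2.2 r hr n i)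
  exact ⟨Finset.univ.sup K, fun i => hτ.monotone_range (Finset.le_sup (Finset.mem_univ i)) (hK i)⟩

namespace SubMarkovSemigroup

variable {E : Type*} [MeasurableSpace E] {S : SubMarkovSemigroup E} {u : E → ℝ}

lemma uPos_eq_posVar (hum : Measurable u) (τ : FinPartition) :
    S.uPos u τ = S.posVar u 0 (List.ofFn τ.t) := by
  funext x
  have h := posVar_ofFn (S := S) (f := u) τ.t x
  rw [τ.first] at h
  rw [List.ofFn_succ, τ.first, posVar_cons_self hum, h]
  rfl

lemma uNeg_eq_uPos_neg (u : E → ℝ) (τ : FinPartition) :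
    S.uNeg u τ = S.uPos (fun y => -u y) τ := by
  funext x
  simp only [uNeg, uPos, act_neg, neg_sub, sub_neg_eq_add, neg_add_eq_sub]

lemma V_eq_uPos_add_uNeg (hui : S.IsIntegrable u) (τ : FinPartition) (x : E) :
    S.V u τ x = S.uPos u τ x + S.uNeg u τ x := by
  simp only [V, uPos, uNeg, ← act_max_zero_add_act_max_neg_zero hui,
    ← act_max_zero_add_act_max_neg_zero (hui.sub (hui.act _)), Finset.sum_add_distrib]
  ring

lemma uPos_sub_uNeg (hum : Measurable u) (hui : S.IsIntegrable u) (τ : FinPartition) (x : E) :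
    S.uPos u τ x - S.uNeg u τ x = u x := by
  rw [uNeg_eq_uPos_neg, uPos_eq_posVar hum, uPos_eq_posVar (u := fun y => -u y) hum.neg,
    posVar_sub_posVar_neg hui τ.pairwise_zero_cons, act_zero hum]

lemma uPos_mono (hum : Measurable u) (hui : S.IsIntegrable u) {τ : ℕ → FinPartition}
    (hτ : Monotone fun n => Set.range (τ n).t) : Monotone fun n => S.uPos u (τ n) := by
  intro n m hnm x
  simp only [uPos_eq_posVar hum]
  refine posVar_mono_of_subset hum hui (τ m).pairwise_zero_cons
    (List.pairwise_cons.mp (τ n).pairwise_zero_cons).2 fun a ha => ?_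
  rw [List.mem_ofFn] at ha ⊢
  exact hτ hnm ha

lemma exists_act_uPos_le (hum : Measurable u) (hui : S.IsIntegrable u) {τ : ℕ → FinPartition}
    (hτ : Admissible τ) {r : ℝ≥0} (hr : r ∈ ⋃ k : ℕ, Set.range (τ k).t) (n : ℕ) (x : E) :
    ∃ m, S.act r (S.uPos u (τ n)) x ≤ S.uPos u (τ m) x := by
  obtain ⟨m, hm⟩ := hτ.exists_add_mem_range hr n
  refine ⟨m, ?_⟩
  have hshift : (List.ofFn fun i => r + (τ n).t i).Pairwise (· ≤ ·) :=
    (List.sortedLE_ofFn_iff.mpr fun i j hij => add_le_add_right ((τ n).mono hij) r).pairwise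
  rw [uPos_eq_posVar hum, uPos_eq_posVar hum, act_posVar hui, List.map_ofFn, add_zero]
  calc S.posVar u r (List.ofFn ((r + ·) ∘ (τ n).t)) x
      ≤ S.posVar u 0 (r :: List.ofFn fun i => r + (τ n).t i) x :=
        le_add_of_nonneg_left (act_nonneg (fun y => le_max_right _ _) 0 x)
    _ ≤ S.posVar u 0 (List.ofFn (τ m).t) x := by
        refine posVar_mono_of_subset hum hui (τ m).pairwise_zero_cons
          (List.pairwise_cons.mpr ⟨?_, hshift⟩) ?_
        · simp
        · intro a ha
          rw [List.mem_cons, List.mem_ofFn] at ha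
          rw [List.mem_ofFn]
          rcases ha with rfl | ha
          · simpa [(τ n).first] using hm 0
          · exact ha.elim fun i hi => hi ▸ hm i

lemma uPos_nonneg (hum : Measurable u) (τ : FinPartition) (x : E) : 0 ≤ S.uPos u τ x := by
  rw [uPos_eq_posVar hum]
  exact posVar_nonneg u 0 _ x

lemma iSup_uPos_add_iSup_uNeg (hum : Measurable u) (hui : S.IsIntegrable u)
    {τ : ℕ → FinPartition} (hτ : Monotone fun n => Set.range (τ n).t) (x : E) :
    (⨆ n, ENNReal.ofReal (S.uPos u (τ n) x)) + (⨆ n, ENNReal.ofReal (S.uNeg u (τ n) x)) =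
      ⨆ n, ENNReal.ofReal (S.V u (τ n) x) := by
  have hmono {f : E → ℝ} (hfm : Measurable f) (hf : S.IsIntegrable f) :
      Monotone fun n => ENNReal.ofReal (S.uPos f (τ n) x) :=
    fun n m hnm => ENNReal.ofReal_le_ofReal (uPos_mono hfm hf hτ hnm x)
  have hnegm : Measurable fun y => -u y := hum.neg
  simp only [uNeg_eq_uPos_neg u]
  rw [ENNReal.iSup_add_iSup_of_monotone (hmono hum hui) (hmono hnegm hui.neg)]
  congr 1
  funext n
  rw [V_eq_uPos_add_uNeg hui, uNeg_eq_uPos_neg,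
    ENNReal.ofReal_add (uPos_nonneg hum _ x) (uPos_nonneg hnegm _ x)]

lemma lintegral_iSup_uPos_le (hum : Measurable u) (hui : S.IsIntegrable u)
    {τ : ℕ → FinPartition} (hτ : Admissible τ) {r : ℝ≥0}
    (hr : r ∈ ⋃ k : ℕ, Set.range (τ k).t) (x : E) :
    ∫⁻ y, ⨆ n, ENNReal.ofReal (S.uPos u (τ n) y) ∂(S.P r x) ≤
      ⨆ n, ENNReal.ofReal (S.uPos u (τ n) x) := by
  refine lintegral_iSup_ofReal_le_of_forall_exists (fun n => ?_)
    (uPos_mono hum hui hτ.monotone_range) (fun n => uPos_nonneg hum (τ n)) (fun n => ?_)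
    (exists_act_uPos_le hum hui hτ hr · x)
  · rw [uPos_eq_posVar hum]
    exact measurable_posVar hum 0 _
  · rw [uPos_eq_posVar hum]
    exact hui.posVar 0 _ r x

end SubMarkovSemigroup

open SubMarkovSemigroup in
/-- For an admissible sequence `(τ_n)` and `u_i := sup_n u_i^{τ_n}`:
(a) `u₁ + u₂ = sup_n V_{τ_n}(u)` pointwise; (b) `P_r u_i ≤ u_i` for every partition point
`r`; (c) `u = u₁ - u₂` on `{sup_n V_{τ_n}(u) < ∞}`. -/
theorem statement4 {E : Type*} [MeasurableSpace E] (S : SubMarkovSemigroup E)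
    (u : E → ℝ) (hu : Measurable u) (hint : ∀ (t : ℝ≥0) (x : E), Integrable u (S.P t x))
    (τ : ℕ → FinPartition) (hτ : Admissible τ)
    (u₁ u₂ : E → ℝ≥0∞)
    (hu₁ : u₁ = fun x => ⨆ n : ℕ, ENNReal.ofReal (S.uPos u (τ n) x))
    (hu₂ : u₂ = fun x => ⨆ n : ℕ, ENNReal.ofReal (S.uNeg u (τ n) x)) :
    (∀ x : E, u₁ x + u₂ x = ⨆ n : ℕ, ENNReal.ofReal (S.V u (τ n) x)) ∧
    (∀ r ∈ ⋃ k : ℕ, Set.range (τ k).t, ∀ x : E,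
      (∫⁻ y, u₁ y ∂(S.P r x)) ≤ u₁ x ∧ (∫⁻ y, u₂ y ∂(S.P r x)) ≤ u₂ x) ∧
    (∀ x : E, (⨆ n : ℕ, ENNReal.ofReal (S.V u (τ n) x)) < ∞ →
      u x = (u₁ x).toReal - (u₂ x).toReal) := by
  have hint : S.IsIntegrable u := hint
  have hnegm : Measurable fun y => -u y := hu.neg
  subst hu₁ hu₂
  have partA x := iSup_uPos_add_iSup_uNeg hu hint hτ.monotone_range x
  refine ⟨partA, fun r hr x => ⟨lintegral_iSup_uPos_le hu hint hτ hr x, ?_⟩, fun x hx => ?_⟩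
  · simpa only [uNeg_eq_uPos_neg] using lintegral_iSup_uPos_le hnegm hint.neg hτ hr x
  · refine eq_toReal_iSup_ofReal_sub_toReal_iSup_ofReal (fun n => uPos_nonneg hu _ x)
      (fun n => ?_) (fun n => uPos_sub_uNeg hu hint (τ n) x) ((partA x).trans_lt hx)
    simpa only [uNeg_eq_uPos_neg] using uPos_nonneg hnegm (τ n) x
end

section
/- Let u : E → ℝ be measurable with P_t|u| < ∞ pointwise for all t ≥ 0, let α ≥ 0 and let c : E → [0,∞] be measurable such that |P_t u − u| ≤ t·c pointwise for every t ≥ 0 and b := sup_{t≥0} e^{-αt} P_t(|u| + c) is finite pointwise. Then for every β > α, sup_n V^β_{τ_n}(u)(x) < ∞ for every x ∈ E, where τ_n := {k/2^n : 0 ≤ k ≤ n·2^n}. -/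
open MeasureTheory ProbabilityTheory ENNReal Filter
open scoped NNReal

/-- `V^α_τ(u) = Σ_{i=1}^n P^α_{t_{i-1}} |u - P^α_{t_i - t_{i-1}} u| + P^α_{t_n}|u|`,
where `P^α_t = e^{-αt} P_t`. -/
noncomputable def SubMarkovSemigroup.Valpha {E : Type*} [MeasurableSpace E]
    (S : SubMarkovSemigroup E) (α : ℝ) (u : E → ℝ) (τ : FinPartition) (x : E) : ℝ :=
  (∑ i : Fin τ.n, Real.exp (-α * τ.t i.castSucc) * S.act (τ.t i.castSucc)
      (fun y => |u y - Real.exp (-α * ((τ.t i.succ : ℝ) - (τ.t i.castSucc : ℝ)))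
        * S.act (τ.t i.succ - τ.t i.castSucc) u y|) x)
  + Real.exp (-α * τ.t (Fin.last τ.n)) * S.act (τ.t (Fin.last τ.n)) (fun y => |u y|) x

/-- The dyadic partition `τ_n = {k/2^n : 0 ≤ k ≤ n·2^n}`. -/
noncomputable def dyadicPartition (n : ℕ) : FinPartition where
  n := n * 2 ^ n
  t := fun i => (i : ℕ) / (2 ^ n : ℝ≥0)
  mono := by
    intro i j hij
    have : ((i : ℕ) : ℝ≥0) ≤ ((j : ℕ) : ℝ≥0) := by exact_mod_cast hij
    exact div_le_div_of_nonneg_right this (by positivity)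
  first := by simp

/-!
Fix `x`, put `γ = β - α > 0` and `b = sup_t e^{-αt} P_t(|u| + c)(x)`. Over a step of length
`δ ≤ 1` one has `|u - e^{-βδ} P_δ u| ≤ δ c + (1 - e^{-βδ}) P_δ|u| ≤ δ c + βδ P_δ|u|`, so by the
semigroup property the summand of `V^β_τ(u)(x)` starting at time `s` is at most
`δ (1 + β e^β) e^{-γs} b`, while the last term is at most `b`. On the dyadic grid of mesh
`δ = 2^{-n}` these bounds form a geometric series in `e^{-γδ}`, and `δ / (1 - e^{-γδ}) ≤ e^γ / γ`
uniformly in `n`.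
-/

theorem sum_range_mul_exp_neg_mul_le {γ δ : ℝ} (hγ : 0 < γ) (hδ : 0 < δ) (hδ1 : δ ≤ 1) (N : ℕ) :
    ∑ i ∈ Finset.range N, δ * Real.exp (-γ * (i * δ)) ≤ Real.exp γ / γ := by
  set r := Real.exp (-γ * δ)
  have hr : r < 1 := Real.exp_lt_one_iff.2 (by nlinarith)
  have hpow (i : ℕ) : Real.exp (-γ * (i * δ)) = r ^ i := by rw [← Real.exp_nat_mul]; ring_nf
  have hgap : γ * δ ≤ Real.exp γ * (1 - r) :=
    calc γ * δ ≤ Real.exp (γ * δ) - 1 := by linarith [Real.add_one_le_exp (γ * δ)]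
      _ = Real.exp (γ * δ) * (1 - r) := by
          rw [mul_sub, mul_one, ← Real.exp_add, neg_mul, add_neg_cancel, Real.exp_zero]
      _ ≤ Real.exp γ * (1 - r) :=
          mul_le_mul_of_nonneg_right (Real.exp_le_exp.2 (by nlinarith)) (by linarith)
  calc ∑ i ∈ Finset.range N, δ * Real.exp (-γ * (i * δ))
      = δ * ∑ i ∈ Finset.range N, r ^ i := by simp_rw [hpow, Finset.mul_sum]
    _ ≤ δ * (1 - r)⁻¹ := by
        gcongr
        simpa [r] using geom_sum_Ico_le_of_lt_one (m := 0) (n := N) (Real.exp_nonneg _) hr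
    _ ≤ Real.exp γ / γ := by
        rw [← div_eq_mul_inv, div_le_div_iff₀ (by linarith) hγ]
        linarith

theorem dyadicPartition_t (n : ℕ) (i : Fin ((dyadicPartition n).n + 1)) :
    (dyadicPartition n).t i = (i : ℕ) * (2 ^ n)⁻¹ :=
  div_eq_mul_inv _ _

theorem dyadicPartition_t_succ_sub (n : ℕ) (i : Fin (dyadicPartition n).n) :
    (dyadicPartition n).t i.succ - (dyadicPartition n).t i.castSucc = (2 ^ n)⁻¹ := by
  rw [dyadicPartition_t, dyadicPartition_t, Fin.val_succ, Fin.val_castSucc, ← tsub_mul]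
  simp

namespace SubMarkovSemigroup

variable {E : Type*} [MeasurableSpace E] (S : SubMarkovSemigroup E)

/-- The paper's `b = sup_{t ≥ 0} e^{-αt} P_t f`. -/
noncomputable def discountedSup (α : ℝ) (f : E → ℝ≥0∞) (x : E) : ℝ≥0∞ :=
  ⨆ t : ℝ≥0, ENNReal.ofReal (Real.exp (-α * t)) * ∫⁻ y, f y ∂(S.P t x)

theorem ofReal_abs_act_le (t : ℝ≥0) (f : E → ℝ) (x : E) :
    ENNReal.ofReal |S.act t f x| ≤ ∫⁻ y, ENNReal.ofReal |f y| ∂(S.P t x) := by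
  simp_rw [← Real.enorm_eq_ofReal_abs]
  exact enorm_integral_le_lintegral_enorm f

theorem ofReal_exp_mul_act_abs_le (β : ℝ) (t : ℝ≥0) (g : E → ℝ) (x : E) :
    ENNReal.ofReal (Real.exp (-β * t) * S.act t (fun y => |g y|) x)
      ≤ ENNReal.ofReal (Real.exp (-β * t)) * ∫⁻ y, ENNReal.ofReal |g y| ∂(S.P t x) := by
  rw [ENNReal.ofReal_mul (Real.exp_nonneg _)]
  gcongr
  simpa only [abs_abs] using
    (ENNReal.ofReal_le_ofReal (le_abs_self _)).trans (S.ofReal_abs_act_le t (fun y => |g y|) x)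

theorem exp_mul_lintegral_le_discountedSup (α β : ℝ) {f g : E → ℝ≥0∞} (hgf : g ≤ f)
    (t : ℝ≥0) (x : E) :
    ENNReal.ofReal (Real.exp (-β * t)) * ∫⁻ y, g y ∂(S.P t x)
      ≤ ENNReal.ofReal (Real.exp (-(β - α) * t)) * S.discountedSup α f x := by
  have hsplit : Real.exp (-β * t) = Real.exp (-(β - α) * t) * Real.exp (-α * t) := by
    rw [← Real.exp_add]; ring_nf
  rw [hsplit, ENNReal.ofReal_mul (Real.exp_nonneg _), mul_assoc]
  gcongr
  exact le_iSup_of_le t (by gcongr; exact hgf _)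

theorem ofReal_abs_sub_exp_mul_act_le {β : ℝ} (hβ : 0 ≤ β) {u : E → ℝ} {c : E → ℝ≥0∞}
    {δ : ℝ≥0} {y : E} (h : ENNReal.ofReal |S.act δ u y - u y| ≤ δ * c y) :
    ENNReal.ofReal |u y - Real.exp (-β * δ) * S.act δ u y|
      ≤ δ * c y + ENNReal.ofReal (β * δ) * ∫⁻ z, ENNReal.ofReal |u z| ∂(S.P δ y) := by
  set k := Real.exp (-β * δ)
  have hk : 0 ≤ 1 - k := by
    simpa [k] using Real.exp_le_one_iff.2 (by nlinarith [δ.coe_nonneg] : -β * δ ≤ 0)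
  have hk' : 1 - k ≤ β * δ := by linarith [Real.add_one_le_exp (-β * δ)]
  have habs : |u y - k * S.act δ u y| ≤ |S.act δ u y - u y| + (1 - k) * |S.act δ u y| := by
    calc |u y - k * S.act δ u y| = |(u y - S.act δ u y) + (1 - k) * S.act δ u y| := by ring_nf
      _ ≤ |u y - S.act δ u y| + |(1 - k) * S.act δ u y| := abs_add_le _ _
      _ = _ := by rw [abs_sub_comm, abs_mul, abs_of_nonneg hk]
  calc ENNReal.ofReal |u y - k * S.act δ u y|
      ≤ ENNReal.ofReal |S.act δ u y - u y|
          + ENNReal.ofReal (1 - k) * ENNReal.ofReal |S.act δ u y| := by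
        rw [← ENNReal.ofReal_mul hk]
        exact (ENNReal.ofReal_le_ofReal habs).trans ENNReal.ofReal_add_le
    _ ≤ _ := by
        gcongr
        exact S.ofReal_abs_act_le δ u y

theorem lintegral_abs_sub_exp_mul_act_le {β : ℝ} (hβ : 0 ≤ β) {u : E → ℝ} {c : E → ℝ≥0∞}
    (hu : Measurable u) (hc : Measurable c) {δ : ℝ≥0}
    (h1 : ∀ y, ENNReal.ofReal |S.act δ u y - u y| ≤ δ * c y) (s : ℝ≥0) (x : E) :
    ∫⁻ y, ENNReal.ofReal |u y - Real.exp (-β * δ) * S.act δ u y| ∂(S.P s x)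
      ≤ δ * ∫⁻ y, c y ∂(S.P s x)
        + ENNReal.ofReal (β * δ) * ∫⁻ y, ENNReal.ofReal |u y| ∂(S.P (s + δ) x) := by
  refine (lintegral_mono fun y => S.ofReal_abs_sub_exp_mul_act_le hβ (h1 y)).trans_eq ?_
  rw [lintegral_add_left (hc.const_mul _), lintegral_const_mul' _ _ ENNReal.coe_ne_top,
    lintegral_const_mul' _ _ ENNReal.ofReal_ne_top, ← S.map_add s δ _ hu.abs.ennreal_ofReal x]

theorem ofReal_exp_mul_act_increment_le {α β : ℝ} (hβ : 0 ≤ β) (hαβ : α ≤ β) {u : E → ℝ}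
    {c : E → ℝ≥0∞} (hu : Measurable u) (hc : Measurable c) {s δ : ℝ≥0} (hδ : δ ≤ 1)
    (h1 : ∀ y, ENNReal.ofReal |S.act δ u y - u y| ≤ δ * c y) (x : E) :
    ENNReal.ofReal (Real.exp (-β * s) *
        S.act s (fun y => |u y - Real.exp (-β * δ) * S.act δ u y|) x)
      ≤ ENNReal.ofReal (δ * (1 + β * Real.exp β) * Real.exp (-(β - α) * s)) *
          S.discountedSup α (fun y => ENNReal.ofReal |u y| + c y) x := by
  set W := S.discountedSup α (fun y => ENNReal.ofReal |u y| + c y) x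
  set Ic := ∫⁻ y, c y ∂(S.P s x)
  set Iu := ∫⁻ y, ENNReal.ofReal |u y| ∂(S.P (s + δ) x)
  set A := ENNReal.ofReal (Real.exp (-(β - α) * s))
  have hcW : ENNReal.ofReal (Real.exp (-β * s)) * Ic ≤ A * W :=
    S.exp_mul_lintegral_le_discountedSup α β (fun y => le_add_self) s x
  have huW : ENNReal.ofReal (Real.exp (-β * (s + δ : ℝ≥0))) * Iu ≤ A * W := by
    refine (S.exp_mul_lintegral_le_discountedSup α β (f := fun y => ENNReal.ofReal |u y| + c y)
      (fun y => le_self_add) (s + δ) x).trans ?_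
    refine mul_le_mul_left (ENNReal.ofReal_le_ofReal (Real.exp_le_exp.2 ?_)) W
    push_cast
    nlinarith [δ.coe_nonneg]
  have hδ' : (δ : ℝ) ≤ 1 := by exact_mod_cast hδ
  calc ENNReal.ofReal (Real.exp (-β * s) *
          S.act s (fun y => |u y - Real.exp (-β * δ) * S.act δ u y|) x)
      ≤ ENNReal.ofReal (Real.exp (-β * s)) * (δ * Ic + ENNReal.ofReal (β * δ) * Iu) :=
        (S.ofReal_exp_mul_act_abs_le β s _ x).trans
          (by gcongr; exact S.lintegral_abs_sub_exp_mul_act_le hβ hu hc h1 s x)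
    _ = δ * (ENNReal.ofReal (Real.exp (-β * s)) * Ic)
          + ENNReal.ofReal (β * δ * Real.exp (β * δ))
            * (ENNReal.ofReal (Real.exp (-β * (s + δ : ℝ≥0))) * Iu) := by
        have hsplit : Real.exp (-β * s) = Real.exp (β * δ) * Real.exp (-β * (s + δ : ℝ≥0)) := by
          rw [← Real.exp_add]; push_cast; ring_nf
        rw [hsplit, ENNReal.ofReal_mul (Real.exp_nonneg _),
          ENNReal.ofReal_mul (by positivity : (0 : ℝ) ≤ β * δ)]
        ring
    _ ≤ δ * (A * W) + ENNReal.ofReal (β * δ * Real.exp β) * (A * W) := by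
        gcongr _ * ?_ + ENNReal.ofReal (β * δ * ?_) * ?_
        exact Real.exp_le_exp.2 (by nlinarith)
    _ = _ := by
        rw [← ENNReal.ofReal_coe_nnreal, ← add_mul, ← ENNReal.ofReal_add (by positivity)
          (by positivity), ← mul_assoc, ← ENNReal.ofReal_mul (by positivity)]
        ring_nf

theorem ofReal_Valpha_le {α β : ℝ} (hβ : 0 ≤ β) (hαβ : α ≤ β) {u : E → ℝ} {c : E → ℝ≥0∞}
    (hu : Measurable u) (hc : Measurable c)
    (h1 : ∀ (t : ℝ≥0) (y : E), ENNReal.ofReal |S.act t u y - u y| ≤ t * c y)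
    (τ : FinPartition) (hmesh : ∀ i : Fin τ.n, τ.t i.succ - τ.t i.castSucc ≤ 1) (x : E) :
    ENNReal.ofReal (S.Valpha β u τ x)
      ≤ (∑ i : Fin τ.n, ENNReal.ofReal ((τ.t i.succ - τ.t i.castSucc : ℝ≥0)
            * (1 + β * Real.exp β) * Real.exp (-(β - α) * τ.t i.castSucc)) + 1)
        * S.discountedSup α (fun y => ENNReal.ofReal |u y| + c y) x := by
  set T := τ.t (Fin.last τ.n)
  have hlast : ENNReal.ofReal (Real.exp (-β * T) * S.act T (fun y => |u y|) x)
      ≤ S.discountedSup α (fun y => ENNReal.ofReal |u y| + c y) x :=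
    calc _ ≤ ENNReal.ofReal (Real.exp (-β * T)) * ∫⁻ y, ENNReal.ofReal |u y| ∂(S.P T x) :=
          S.ofReal_exp_mul_act_abs_le β T u x
      _ ≤ ENNReal.ofReal (Real.exp (-(β - α) * T))
            * S.discountedSup α (fun y => ENNReal.ofReal |u y| + c y) x :=
          S.exp_mul_lintegral_le_discountedSup α β (fun y => le_self_add) T x
      _ ≤ _ := by
          refine mul_le_of_le_one_left' (ENNReal.ofReal_le_one.2 (Real.exp_le_one_iff.2 ?_))
          nlinarith [T.coe_nonneg]
  rw [SubMarkovSemigroup.Valpha, add_mul, one_mul, Finset.sum_mul]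
  refine ENNReal.ofReal_add_le.trans (add_le_add ?_ hlast)
  refine (Finset.le_sum_of_subadditive _ ENNReal.ofReal_zero.le (fun _ _ => ENNReal.ofReal_add_le)
    _ _).trans (Finset.sum_le_sum fun i _ => ?_)
  rw [← NNReal.coe_sub (τ.mono i.castSucc_le_succ)]
  exact S.ofReal_exp_mul_act_increment_le hβ hαβ hu hc (hmesh i) (h1 _) x

theorem ofReal_Valpha_dyadicPartition_le {α β : ℝ} (hβ : 0 ≤ β) (hαβ : α < β) {u : E → ℝ}
    {c : E → ℝ≥0∞} (hu : Measurable u) (hc : Measurable c)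
    (h1 : ∀ (t : ℝ≥0) (y : E), ENNReal.ofReal |S.act t u y - u y| ≤ t * c y) (n : ℕ) (x : E) :
    ENNReal.ofReal (S.Valpha β u (dyadicPartition n) x)
      ≤ (ENNReal.ofReal ((1 + β * Real.exp β) * (Real.exp (β - α) / (β - α))) + 1)
        * S.discountedSup α (fun y => ENNReal.ofReal |u y| + c y) x := by
  have hδ1 : ((2 : ℝ≥0) ^ n)⁻¹ ≤ 1 := inv_le_one_of_one_le₀ (one_le_pow₀ one_le_two)
  have hmesh (i : Fin (dyadicPartition n).n) :
      (dyadicPartition n).t i.succ - (dyadicPartition n).t i.castSucc ≤ 1 := by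
    rw [dyadicPartition_t_succ_sub]
    exact hδ1
  refine (S.ofReal_Valpha_le hβ hαβ.le hu hc h1 _ hmesh x).trans ?_
  gcongr
  rw [← ENNReal.ofReal_sum_of_nonneg (fun i _ => by positivity)]
  apply ENNReal.ofReal_le_ofReal
  simp_rw [dyadicPartition_t_succ_sub, dyadicPartition_t, Fin.val_castSucc]
  set δ : ℝ≥0 := (2 ^ n)⁻¹
  simp_rw [mul_right_comm (δ : ℝ) (1 + β * Real.exp β), ← Finset.sum_mul,
    mul_comm (1 + β * Real.exp β)]
  rw [Fin.sum_univ_eq_sum_range (fun i => (δ : ℝ) * Real.exp (-(β - α) * ((i * δ : ℝ≥0) : ℝ)))]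
  gcongr
  push_cast
  exact sum_range_mul_exp_neg_mul_le (sub_pos.2 hαβ) (by positivity) (mod_cast hδ1) _

end SubMarkovSemigroup

theorem statement10_general {E : Type*} [MeasurableSpace E] (S : SubMarkovSemigroup E)
    (u : E → ℝ) (hu : Measurable u)
    (α : ℝ) (hα : 0 ≤ α) (c : E → ℝ≥0∞) (hc : Measurable c)
    (h1 : ∀ (t : ℝ≥0) (x : E),
      ENNReal.ofReal |S.act t u x - u x| ≤ (t : ℝ≥0∞) * c x)
    (hb : ∀ x : E, (⨆ t : ℝ≥0,
      ENNReal.ofReal (Real.exp (-α * t)) *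
        ∫⁻ y, (ENNReal.ofReal |u y| + c y) ∂(S.P t x)) < ∞) :
    ∀ β : ℝ, α < β →
      ∀ x : E, (⨆ n : ℕ, ENNReal.ofReal (S.Valpha β u (dyadicPartition n) x)) < ∞ := by
  intro β hαβ x
  have hW : S.discountedSup α (fun y => ENNReal.ofReal |u y| + c y) x < ∞ := hb x
  calc (⨆ n : ℕ, ENNReal.ofReal (S.Valpha β u (dyadicPartition n) x))
      ≤ (ENNReal.ofReal ((1 + β * Real.exp β) * (Real.exp (β - α) / (β - α))) + 1)
        * S.discountedSup α (fun y => ENNReal.ofReal |u y| + c y) x :=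
        iSup_le fun n => S.ofReal_Valpha_dyadicPartition_le (hα.trans hαβ.le) hαβ hu hc h1 n x
    _ < ∞ := ENNReal.mul_lt_top (by finiteness) hW

/-- If `|P_t u - u| ≤ t·c` pointwise and
`b := sup_{t≥0} e^{-αt} P_t(|u|+c)` is finite pointwise, then for every `β > α`,
`sup_n V^β_{τ_n}(u)(x) < ∞` for every `x`, with `τ_n = {k/2^n : 0 ≤ k ≤ n·2^n}`. -/
theorem statement10 {E : Type*} [MeasurableSpace E] (S : SubMarkovSemigroup E)
    (u : E → ℝ) (hu : Measurable u)
    (hint : ∀ (t : ℝ≥0) (x : E), Integrable u (S.P t x))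
    (α : ℝ) (hα : 0 ≤ α) (c : E → ℝ≥0∞) (hc : Measurable c)
    (h1 : ∀ (t : ℝ≥0) (x : E),
      ENNReal.ofReal |S.act t u x - u x| ≤ (t : ℝ≥0∞) * c x)
    (hb : ∀ x : E, (⨆ t : ℝ≥0,
      ENNReal.ofReal (Real.exp (-α * t)) *
        ∫⁻ y, (ENNReal.ofReal |u y| + c y) ∂(S.P t x)) < ∞) :
    ∀ β : ℝ, α < β →
      ∀ x : E, (⨆ n : ℕ, ENNReal.ofReal (S.Valpha β u (dyadicPartition n) x)) < ∞ :=
  statement10_general S u hu α hα c hc h1 hb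
end

section
/- Let (μ_t)_{t≥0} be a vaguely continuous convolution semigroup of sub-probability measures on [0,∞) in the sense that μ_0 = δ_0, μ_t([0,∞)) ≤ 1 for all t, and μ_{t+s} is the image of the product measure μ_t ⊗ μ_s under addition (s₁,s₂) ↦ s₁+s₂. Define P^μ_t f(x) := ∫_0^∞ P_s f(x) μ_t(ds) for measurable f ≥ 0. Then: (a) (P^μ_t)_{t≥0} is a sub-Markovian semigroup of kernels on E; (b) every function that is supermedian for (P_t) is supermedian for (P^μ_t); (c) if u = u₁ − u₂ with u₁, u₂ : E → [0,∞) real-valued supermedian functions for (P_t), then V^{(P^μ_t)}(u) ≤ u₁ + u₂ pointwise. -/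
/-!
Parts (a) and (b) are Fubini–Tonelli: the convolution identity for `μ_{t+s}` combined with the
semigroup property of `(P_t)` gives the semigroup property of `(P^μ_t)`, and averaging
`P_s g ≤ g` against the sub-probability `μ_t` gives `P^μ_t g ≤ g`.

For (c), write `Q_t = P^μ_t` and `w = u₁ + u₂`. Since `0 ≤ Q_h u_i ≤ u_i`,
`|u - Q_h u| ≤ (u₁ - Q_h u₁) + (u₂ - Q_h u₂) = w - Q_h w`, hence
`Q_t |u - Q_h u| ≤ Q_t w - Q_{t+h} w`. Along a partition these bounds telescope to
`w - Q_{t_n} w`, and the remaining term `Q_{t_n} |u|` is at most `Q_{t_n} w`.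
-/

open MeasureTheory ProbabilityTheory ENNReal Filter
open scoped NNReal

/-- Subordinated semigroup acting on `[0,∞]`-valued functions:
`P^μ_t f (x) = ∫_0^∞ P_s f (x) μ_t(ds)`. -/
noncomputable def SubMarkovSemigroup.subord {E : Type*} [MeasurableSpace E]
    (S : SubMarkovSemigroup E) (m : ℝ≥0 → Measure ℝ≥0) (t : ℝ≥0)
    (f : E → ℝ≥0∞) (x : E) : ℝ≥0∞ :=
  ∫⁻ s, (∫⁻ y, f y ∂(S.P s x)) ∂(m t)

/-- Subordinated semigroup acting on real-valued functions. -/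
noncomputable def SubMarkovSemigroup.subordR {E : Type*} [MeasurableSpace E]
    (S : SubMarkovSemigroup E) (m : ℝ≥0 → Measure ℝ≥0) (t : ℝ≥0)
    (f : E → ℝ) (x : E) : ℝ :=
  ∫ s, S.act s f x ∂(m t)

/-- `V_τ^{(P^μ_t)}(u)`, the variation of `u` along the partition `τ` computed with the
subordinated semigroup. -/
noncomputable def SubMarkovSemigroup.Vsub {E : Type*} [MeasurableSpace E]
    (S : SubMarkovSemigroup E) (m : ℝ≥0 → Measure ℝ≥0) (u : E → ℝ)
    (τ : FinPartition) (x : E) : ℝ :=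
  (∑ i : Fin τ.n, S.subordR m (τ.t i.castSucc)
      (fun y => |u y - S.subordR m (τ.t i.succ - τ.t i.castSucc) u y|) x)
  + S.subordR m (τ.t (Fin.last τ.n)) (fun y => |u y|) x

lemma Fin.sum_castSucc_sub_succ {M : Type*} [AddCommGroup M] {n : ℕ} (f : Fin (n + 1) → M) :
    ∑ i : Fin n, (f i.castSucc - f i.succ) = f 0 - f (Fin.last n) := by
  induction n with
  | zero => simp
  | succ n ih =>
    rw [Fin.sum_univ_castSucc]
    simp only [Fin.succ_castSucc]
    rw [ih fun i => f i.castSucc]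
    simp

namespace SubMarkovSemigroup

variable {E : Type*} [MeasurableSpace E] (S : SubMarkovSemigroup E)

instance isFiniteMeasure_P (t : ℝ≥0) (x : E) : IsFiniteMeasure (S.P t x) :=
  ⟨(S.subMarkov t x).trans_lt one_lt_top⟩

def JointlyMeasurable : Prop :=
  ∀ f : E → ℝ≥0∞, Measurable f → Measurable fun pr : ℝ≥0 × E => ∫⁻ y, f y ∂(S.P pr.1 pr.2)

def IsSupermedian (g : E → ℝ≥0∞) : Prop :=
  ∀ t x, ∫⁻ y, g y ∂(S.P t x) ≤ g x

structure IsRealSupermedian (u : E → ℝ) : Prop where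
  measurable : Measurable u
  nonneg : ∀ x, 0 ≤ u x
  supermedian : S.IsSupermedian fun y => ENNReal.ofReal (u y)

variable {S} {m : ℝ≥0 → Measure ℝ≥0} {u₁ u₂ : E → ℝ}

lemma isSupermedian_one : S.IsSupermedian fun _ => 1 := fun t x => by
  simpa using S.subMarkov t x

lemma JointlyMeasurable.measurable_lintegral (hJM : S.JointlyMeasurable) {f : E → ℝ≥0∞}
    (hf : Measurable f) (x : E) : Measurable fun s => ∫⁻ y, f y ∂(S.P s x) :=
  (hJM f hf).comp measurable_prodMk_right

lemma JointlyMeasurable.measurable_subord (hJM : S.JointlyMeasurable) [∀ t, SFinite (m t)]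
    (t : ℝ≥0) {f : E → ℝ≥0∞} (hf : Measurable f) : Measurable (S.subord m t f) :=
  ((hJM f hf).comp measurable_swap).lintegral_prod_right'

lemma subord_mono (t : ℝ≥0) : Monotone (S.subord m t) :=
  fun _ _ hfg _ => lintegral_mono fun _ => lintegral_mono hfg

lemma subord_add_left (hJM : S.JointlyMeasurable) (t : ℝ≥0) {f : E → ℝ≥0∞}
    (hf : Measurable f) (g : E → ℝ≥0∞) :
    S.subord m t (f + g) = S.subord m t f + S.subord m t g := by
  ext x
  simp only [subord, Pi.add_apply, lintegral_add_left hf]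
  exact lintegral_add_left (hJM.measurable_lintegral hf x) _

lemma IsSupermedian.add {f g : E → ℝ≥0∞} (hf : Measurable f) (hfs : S.IsSupermedian f)
    (hgs : S.IsSupermedian g) : S.IsSupermedian (f + g) := fun t x => by
  simp only [Pi.add_apply, lintegral_add_left hf]
  exact add_le_add (hfs t x) (hgs t x)

lemma IsSupermedian.subord_le (hmsub : ∀ t, m t Set.univ ≤ 1) {g : E → ℝ≥0∞}
    (hg : S.IsSupermedian g) (t : ℝ≥0) (x : E) : S.subord m t g x ≤ g x :=
  calc S.subord m t g x ≤ ∫⁻ _, g x ∂(m t) := lintegral_mono fun s => hg s x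
    _ = g x * m t Set.univ := lintegral_const _
    _ ≤ g x := mul_le_of_le_one_right' (hmsub t)

lemma subord_time_zero (hm0 : m 0 = Measure.dirac 0) {f : E → ℝ≥0∞} (hf : Measurable f)
    (x : E) : S.subord m 0 f x = f x := by
  rw [subord, hm0, lintegral_dirac]
  exact S.map_zero f hf x

lemma subord_time_add (hJM : S.JointlyMeasurable) [∀ t, SFinite (m t)]
    (hmconv : ∀ t s : ℝ≥0,
      m (t + s) = Measure.map (fun pr : ℝ≥0 × ℝ≥0 => pr.1 + pr.2) ((m t).prod (m s)))
    (t s : ℝ≥0) {f : E → ℝ≥0∞} (hf : Measurable f) (x : E) :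
    S.subord m (t + s) f x = S.subord m t (S.subord m s f) x := by
  have hK := hJM.measurable_lintegral hf x
  calc S.subord m (t + s) f x
      = ∫⁻ a, ∫⁻ b, ∫⁻ y, f y ∂(S.P (a + b) x) ∂(m s) ∂(m t) := by
        rw [subord, hmconv, lintegral_map hK measurable_add]
        exact lintegral_prod _ (hK.comp measurable_add).aemeasurable
    _ = ∫⁻ a, ∫⁻ b, ∫⁻ y, ∫⁻ z, f z ∂(S.P b y) ∂(S.P a x) ∂(m s) ∂(m t) := by
        simp only [S.map_add _ _ f hf]
    _ = S.subord m t (S.subord m s f) x :=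
        lintegral_congr fun a => lintegral_lintegral_swap (hJM f hf).aemeasurable

lemma act_eq_toReal_lintegral {f : E → ℝ} (hf : Measurable f) (hf0 : ∀ y, 0 ≤ f y)
    (t : ℝ≥0) (x : E) : S.act t f x = (∫⁻ y, ENNReal.ofReal (f y) ∂(S.P t x)).toReal :=
  integral_eq_lintegral_of_nonneg_ae (ae_of_all _ hf0) hf.aestronglyMeasurable

lemma subordR_eq_toReal_subord (hJM : S.JointlyMeasurable) {f : E → ℝ} (hf : Measurable f)
    (hf0 : ∀ y, 0 ≤ f y) {x : E} (hfin : ∀ s, ∫⁻ y, ENNReal.ofReal (f y) ∂(S.P s x) ≠ ∞)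
    (t : ℝ≥0) : S.subordR m t f x = (S.subord m t (fun y => ENNReal.ofReal (f y)) x).toReal := by
  simp only [subordR, act_eq_toReal_lintegral hf hf0]
  exact integral_toReal (hJM.measurable_lintegral hf.ennreal_ofReal x).aemeasurable
    (ae_of_all _ fun s => (hfin s).lt_top)

namespace IsRealSupermedian

variable {u w : E → ℝ}

lemma add (hu₁ : S.IsRealSupermedian u₁) (hu₂ : S.IsRealSupermedian u₂) :
    S.IsRealSupermedian fun y => u₁ y + u₂ y where
  measurable := hu₁.measurable.add hu₂.measurable
  nonneg y := add_nonneg (hu₁.nonneg y) (hu₂.nonneg y)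
  supermedian := by
    simp only [ENNReal.ofReal_add (hu₁.nonneg _) (hu₂.nonneg _)]
    exact IsSupermedian.add hu₁.measurable.ennreal_ofReal hu₁.supermedian hu₂.supermedian

lemma lintegral_ne_top_of_le (hw : S.IsRealSupermedian w) (huw : ∀ y, u y ≤ w y)
    (s : ℝ≥0) (x : E) : ∫⁻ y, ENNReal.ofReal (u y) ∂(S.P s x) ≠ ∞ :=
  ne_top_of_le_ne_top ofReal_ne_top
    ((lintegral_mono fun y => ofReal_le_ofReal (huw y)).trans (hw.supermedian s x))

lemma integrable (hu : S.IsRealSupermedian u) (s : ℝ≥0) (x : E) : Integrable u (S.P s x) :=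
  (lintegral_ofReal_ne_top_iff_integrable hu.measurable.aestronglyMeasurable
    (ae_of_all _ hu.nonneg)).1 (hu.lintegral_ne_top_of_le (fun _ => le_rfl) s x)

lemma subordR_eq_of_le (hJM : S.JointlyMeasurable) (hw : S.IsRealSupermedian w)
    (hu : Measurable u) (hu0 : ∀ y, 0 ≤ u y) (huw : ∀ y, u y ≤ w y) (t : ℝ≥0) (x : E) :
    S.subordR m t u x = (S.subord m t (fun y => ENNReal.ofReal (u y)) x).toReal :=
  subordR_eq_toReal_subord hJM hu hu0 (hw.lintegral_ne_top_of_le huw · x) t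

lemma subordR_eq (hJM : S.JointlyMeasurable) (hu : S.IsRealSupermedian u) (t : ℝ≥0) (x : E) :
    S.subordR m t u x = (S.subord m t (fun y => ENNReal.ofReal (u y)) x).toReal :=
  hu.subordR_eq_of_le hJM hu.measurable hu.nonneg (fun _ => le_rfl) t x

lemma subord_ne_top (hmsub : ∀ t, m t Set.univ ≤ 1) (hu : S.IsRealSupermedian u)
    (t : ℝ≥0) (x : E) : S.subord m t (fun y => ENNReal.ofReal (u y)) x ≠ ∞ :=
  ne_top_of_le_ne_top ofReal_ne_top (hu.supermedian.subord_le hmsub t x)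

lemma subordR_le_of_le (hJM : S.JointlyMeasurable) (hmsub : ∀ t, m t Set.univ ≤ 1)
    (hw : S.IsRealSupermedian w) (hu : Measurable u) (hu0 : ∀ y, 0 ≤ u y)
    (huw : ∀ y, u y ≤ w y) (t : ℝ≥0) (x : E) : S.subordR m t u x ≤ S.subordR m t w x := by
  rw [hw.subordR_eq_of_le hJM hu hu0 huw, hw.subordR_eq hJM]
  exact toReal_mono (hw.subord_ne_top hmsub t x)
    (subord_mono t (fun y => ofReal_le_ofReal (huw y)) x)

lemma subordR_nonneg (hJM : S.JointlyMeasurable) (hu : S.IsRealSupermedian u) (t : ℝ≥0)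
    (x : E) : 0 ≤ S.subordR m t u x := by
  rw [hu.subordR_eq hJM]
  exact toReal_nonneg

lemma subordR_le (hJM : S.JointlyMeasurable) (hmsub : ∀ t, m t Set.univ ≤ 1)
    (hu : S.IsRealSupermedian u) (t : ℝ≥0) (x : E) : S.subordR m t u x ≤ u x := by
  rw [hu.subordR_eq hJM, ← toReal_ofReal (hu.nonneg x)]
  exact toReal_mono ofReal_ne_top (hu.supermedian.subord_le hmsub t x)

lemma subordR_time_zero (hJM : S.JointlyMeasurable) (hm0 : m 0 = Measure.dirac 0)
    (hu : S.IsRealSupermedian u) (x : E) : S.subordR m 0 u x = u x := by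
  rw [hu.subordR_eq hJM, subord_time_zero hm0 hu.measurable.ennreal_ofReal,
    toReal_ofReal (hu.nonneg x)]

lemma measurable_subordR (hJM : S.JointlyMeasurable) [∀ t, SFinite (m t)]
    (hu : S.IsRealSupermedian u) (t : ℝ≥0) : Measurable (S.subordR m t u) := by
  simp only [funext (hu.subordR_eq hJM t)]
  exact (hJM.measurable_subord t hu.measurable.ennreal_ofReal).ennreal_toReal

lemma integrable_act (hJM : S.JointlyMeasurable) (hmsub : ∀ t, m t Set.univ ≤ 1)
    (hu : S.IsRealSupermedian u) (t : ℝ≥0) (x : E) :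
    Integrable (fun s => S.act s u x) (m t) := by
  simp only [act_eq_toReal_lintegral hu.measurable hu.nonneg]
  exact integrable_toReal_of_lintegral_ne_top
    (hJM.measurable_lintegral hu.measurable.ennreal_ofReal x).aemeasurable
    (hu.subord_ne_top hmsub t x)

end IsRealSupermedian

lemma subordR_add (hJM : S.JointlyMeasurable) (hmsub : ∀ t, m t Set.univ ≤ 1)
    (hu₁ : S.IsRealSupermedian u₁) (hu₂ : S.IsRealSupermedian u₂) (t : ℝ≥0) (x : E) :
    S.subordR m t (fun y => u₁ y + u₂ y) x = S.subordR m t u₁ x + S.subordR m t u₂ x := by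
  simp only [subordR, act, integral_add (hu₁.integrable _ _) (hu₂.integrable _ _)]
  exact integral_add (hu₁.integrable_act hJM hmsub t x) (hu₂.integrable_act hJM hmsub t x)

lemma subordR_sub (hJM : S.JointlyMeasurable) (hmsub : ∀ t, m t Set.univ ≤ 1)
    (hu₁ : S.IsRealSupermedian u₁) (hu₂ : S.IsRealSupermedian u₂) (t : ℝ≥0) (x : E) :
    S.subordR m t (fun y => u₁ y - u₂ y) x = S.subordR m t u₁ x - S.subordR m t u₂ x := by
  simp only [subordR, act, integral_sub (hu₁.integrable _ _) (hu₂.integrable _ _)]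
  exact integral_sub (hu₁.integrable_act hJM hmsub t x) (hu₂.integrable_act hJM hmsub t x)

lemma measurable_subordR_sub (hJM : S.JointlyMeasurable) [∀ t, SFinite (m t)]
    (hmsub : ∀ t, m t Set.univ ≤ 1) (hu₁ : S.IsRealSupermedian u₁)
    (hu₂ : S.IsRealSupermedian u₂) (t : ℝ≥0) :
    Measurable (S.subordR m t fun y => u₁ y - u₂ y) := by
  simp only [funext (subordR_sub hJM hmsub hu₁ hu₂ t)]
  exact (hu₁.measurable_subordR hJM t).sub (hu₂.measurable_subordR hJM t)

lemma abs_sub_subordR_le (hJM : S.JointlyMeasurable) (hmsub : ∀ t, m t Set.univ ≤ 1)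
    (hu₁ : S.IsRealSupermedian u₁) (hu₂ : S.IsRealSupermedian u₂) (h : ℝ≥0) (y : E) :
    |u₁ y - u₂ y - S.subordR m h (fun z => u₁ z - u₂ z) y|
      ≤ u₁ y + u₂ y - S.subordR m h (fun z => u₁ z + u₂ z) y := by
  rw [subordR_sub hJM hmsub hu₁ hu₂, subordR_add hJM hmsub hu₁ hu₂, abs_le]
  have := hu₁.subordR_le hJM hmsub h y
  have := hu₂.subordR_le hJM hmsub h y
  have := hu₁.subordR_nonneg hJM (m := m) h y
  have := hu₂.subordR_nonneg hJM (m := m) h y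
  constructor <;> linarith

lemma subordR_abs_sub_le (hJM : S.JointlyMeasurable) [∀ t, SFinite (m t)]
    (hmsub : ∀ t, m t Set.univ ≤ 1)
    (hmconv : ∀ t s : ℝ≥0,
      m (t + s) = Measure.map (fun pr : ℝ≥0 × ℝ≥0 => pr.1 + pr.2) ((m t).prod (m s)))
    (hu₁ : S.IsRealSupermedian u₁) (hu₂ : S.IsRealSupermedian u₂) (t h : ℝ≥0) (x : E) :
    S.subordR m t (fun y => |u₁ y - u₂ y - S.subordR m h (fun z => u₁ z - u₂ z) y|) x
      ≤ S.subordR m t (fun y => u₁ y + u₂ y) x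
        - S.subordR m (t + h) (fun y => u₁ y + u₂ y) x := by
  have hw := hu₁.add hu₂
  set d := fun y => |u₁ y - u₂ y - S.subordR m h (fun z => u₁ z - u₂ z) y|
  set W : E → ℝ≥0∞ := fun y => ENNReal.ofReal (u₁ y + u₂ y)
  have hd : Measurable d :=
    ((hu₁.measurable.sub hu₂.measurable).sub (measurable_subordR_sub hJM hmsub hu₁ hu₂ h)).abs
  have hdw : ∀ y, d y ≤ u₁ y + u₂ y := fun y =>
    (abs_sub_subordR_le hJM hmsub hu₁ hu₂ h y).trans (sub_le_self _ (hw.subordR_nonneg hJM h y))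
  have hpt : (fun y => ENNReal.ofReal (d y)) + S.subord m h W ≤ W := fun y => by
    rw [Pi.add_apply, ← ofReal_toReal (hw.subord_ne_top hmsub h y), ← hw.subordR_eq hJM,
      ← ofReal_add (abs_nonneg _) (hw.subordR_nonneg hJM h y)]
    exact ofReal_le_ofReal (le_sub_iff_add_le.1 (abs_sub_subordR_le hJM hmsub hu₁ hu₂ h y))
  have hsum : S.subord m t (fun y => ENNReal.ofReal (d y)) x + S.subord m (t + h) W x
      ≤ S.subord m t W x :=
    calc _ = S.subord m t ((fun y => ENNReal.ofReal (d y)) + S.subord m h W) x := by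
          rw [subord_time_add hJM hmconv t h hw.measurable.ennreal_ofReal,
            subord_add_left hJM t hd.ennreal_ofReal]
          rfl
      _ ≤ S.subord m t W x := subord_mono t hpt x
  rw [hw.subordR_eq_of_le hJM hd (fun _ => abs_nonneg _) hdw, hw.subordR_eq hJM,
    hw.subordR_eq hJM, le_sub_iff_add_le,
    ← toReal_add (ne_top_of_le_ne_top (hw.subord_ne_top hmsub t x) (le_self_add.trans hsum))
      (hw.subord_ne_top hmsub _ x)]
  exact toReal_mono (hw.subord_ne_top hmsub t x) hsum

lemma Vsub_le (hJM : S.JointlyMeasurable) [∀ t, SFinite (m t)] (hm0 : m 0 = Measure.dirac 0)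
    (hmsub : ∀ t, m t Set.univ ≤ 1)
    (hmconv : ∀ t s : ℝ≥0,
      m (t + s) = Measure.map (fun pr : ℝ≥0 × ℝ≥0 => pr.1 + pr.2) ((m t).prod (m s)))
    (hu₁ : S.IsRealSupermedian u₁) (hu₂ : S.IsRealSupermedian u₂) (τ : FinPartition) (x : E) :
    S.Vsub m (fun y => u₁ y - u₂ y) τ x ≤ u₁ x + u₂ x := by
  have hw := hu₁.add hu₂
  set B : Fin (τ.n + 1) → ℝ := fun i => S.subordR m (τ.t i) (fun y => u₁ y + u₂ y) x
  have hterm (i : Fin τ.n) : S.subordR m (τ.t i.castSucc) (fun y => |u₁ y - u₂ y -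
      S.subordR m (τ.t i.succ - τ.t i.castSucc) (fun z => u₁ z - u₂ z) y|) x
        ≤ B i.castSucc - B i.succ := by
    have := subordR_abs_sub_le hJM hmsub hmconv hu₁ hu₂ (τ.t i.castSucc)
      (τ.t i.succ - τ.t i.castSucc) x
    rwa [add_tsub_cancel_of_le (τ.mono (Fin.castSucc_le_succ i))] at this
  have hlast : S.subordR m (τ.t (Fin.last τ.n)) (fun y => |u₁ y - u₂ y|) x
      ≤ B (Fin.last τ.n) :=
    hw.subordR_le_of_le hJM hmsub (hu₁.measurable.sub hu₂.measurable).abs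
      (fun _ => abs_nonneg _)
      (fun y => (abs_sub (u₁ y) (u₂ y)).trans_eq
        (by rw [abs_of_nonneg (hu₁.nonneg y), abs_of_nonneg (hu₂.nonneg y)])) _ x
  have hB0 : B 0 = u₁ x + u₂ x := by
    simp only [B, τ.first]
    exact hw.subordR_time_zero hJM hm0 x
  calc S.Vsub m (fun y => u₁ y - u₂ y) τ x
      ≤ (B 0 - B (Fin.last τ.n)) + B (Fin.last τ.n) := by
        rw [← Fin.sum_castSucc_sub_succ]
        exact add_le_add (Finset.sum_le_sum fun i _ => hterm i) hlast
    _ = u₁ x + u₂ x := by rw [sub_add_cancel, hB0]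

end SubMarkovSemigroup

/-- For a convolution semigroup `(μ_t)` of sub-probability measures on
`[0,∞)` with `μ_0 = δ_0`, the subordinated family `(P^μ_t)` is a sub-Markovian semigroup
of kernels; every `(P_t)`-supermedian function is `(P^μ_t)`-supermedian; and for
`u = u₁ - u₂` with `u₁, u₂` real-valued `(P_t)`-supermedian,
`V^{(P^μ_t)}(u) ≤ u₁ + u₂` pointwise. -/
theorem statement16 {E : Type*} [MeasurableSpace E] (S : SubMarkovSemigroup E)
    (hJM : ∀ f : E → ℝ≥0∞, Measurable f →
      Measurable (fun pr : ℝ≥0 × E => ∫⁻ y, f y ∂(S.P pr.1 pr.2)))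
    (m : ℝ≥0 → Measure ℝ≥0)
    (hm0 : m 0 = Measure.dirac 0)
    (hmsub : ∀ t : ℝ≥0, m t Set.univ ≤ 1)
    (hmconv : ∀ t s : ℝ≥0,
      m (t + s) = Measure.map (fun pr : ℝ≥0 × ℝ≥0 => pr.1 + pr.2) ((m t).prod (m s))) :
    ((∀ (t : ℝ≥0) (f : E → ℝ≥0∞), Measurable f →
        Measurable (fun x => S.subord m t f x)) ∧
      (∀ (t : ℝ≥0) (x : E), S.subord m t (fun _ => 1) x ≤ 1) ∧
      (∀ f : E → ℝ≥0∞, Measurable f → ∀ x : E, S.subord m 0 f x = f x) ∧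
      (∀ (t s : ℝ≥0) (f : E → ℝ≥0∞), Measurable f → ∀ x : E,
        S.subord m (t + s) f x = S.subord m t (fun y => S.subord m s f y) x)) ∧
    (∀ g : E → ℝ≥0∞, Measurable g → (∀ (t : ℝ≥0) (x : E), ∫⁻ y, g y ∂(S.P t x) ≤ g x) →
      ∀ (t : ℝ≥0) (x : E), S.subord m t g x ≤ g x) ∧
    (∀ u₁ u₂ : E → ℝ, Measurable u₁ → Measurable u₂ →
      (∀ x, 0 ≤ u₁ x) → (∀ x, 0 ≤ u₂ x) →
      (∀ (t : ℝ≥0) (x : E),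
        ∫⁻ y, ENNReal.ofReal (u₁ y) ∂(S.P t x) ≤ ENNReal.ofReal (u₁ x)) →
      (∀ (t : ℝ≥0) (x : E),
        ∫⁻ y, ENNReal.ofReal (u₂ y) ∂(S.P t x) ≤ ENNReal.ofReal (u₂ x)) →
      ∀ x : E, (⨆ τ : FinPartition,
          ENNReal.ofReal (S.Vsub m (fun y => u₁ y - u₂ y) τ x))
        ≤ ENNReal.ofReal (u₁ x + u₂ x)) := by
  have hJM : S.JointlyMeasurable := hJM
  have : ∀ t, IsFiniteMeasure (m t) := fun t => ⟨(hmsub t).trans_lt one_lt_top⟩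
  refine ⟨⟨fun t f hf => hJM.measurable_subord t hf,
    fun t x => SubMarkovSemigroup.isSupermedian_one.subord_le hmsub t x,
    fun f hf x => SubMarkovSemigroup.subord_time_zero hm0 hf x,
    fun t s f hf x => SubMarkovSemigroup.subord_time_add hJM hmconv t s hf x⟩,
    fun g _ hg => SubMarkovSemigroup.IsSupermedian.subord_le hmsub hg,
    fun u₁ u₂ hu₁ hu₂ h01 h02 hsm₁ hsm₂ x => iSup_le fun τ => ofReal_le_ofReal ?_⟩
  exact SubMarkovSemigroup.Vsub_le hJM hm0 hmsub hmconv ⟨hu₁, h01, hsm₁⟩ ⟨hu₂, h02, hsm₂⟩ τ x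
end
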